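/- For all integers k, m ≥ 0 and all smooth functions φ, ψ : ℝ^n × ℝ^n → ℝ such that φ(z,·) and ψ(z,·) are homogeneous polynomials in w of degrees k and m respectively (with coefficients smooth in z), there exist smooth functions α, β : ℝ^n × ℝ^n → ℝ, fiberwise homogeneous polynomials in w of degrees k+m−1 and k+m+1 respectively, such that {H_{k,φ}, H_{m,ψ}} = H_{k+m−1,α} + H_{k+m+1,β} on ℝ^n × B. -/

import Mathlib

open Real

/-- The Poisson bracket `{F,G} = ∑_j (∂F/∂w_j·∂G/∂z_j − ∂F/∂z_j·∂G/∂w_j)` of smooth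
functions on (an open subset of) `ℝ^n_z × ℝ^n_w`. -/
noncomputable def pbn {n : ℕ}
    (F G : EuclideanSpace ℝ (Fin n) × EuclideanSpace ℝ (Fin n) → ℝ)
    (p : EuclideanSpace ℝ (Fin n) × EuclideanSpace ℝ (Fin n)) : ℝ :=
  ∑ j : Fin n,
    (fderiv ℝ F p (0, EuclideanSpace.single j 1) * fderiv ℝ G p (EuclideanSpace.single j 1, 0)
      - fderiv ℝ F p (EuclideanSpace.single j 1, 0) * fderiv ℝ G p (0, EuclideanSpace.single j 1))

/-- `H_{k,φ}(z,w) = φ(z,w)·(1−‖w‖²)^((1−k)/2)`, for an integer `k` (possibly negative). -/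
noncomputable def Hk {n : ℕ} (k : ℤ)
    (φ : EuclideanSpace ℝ (Fin n) × EuclideanSpace ℝ (Fin n) → ℝ)
    (p : EuclideanSpace ℝ (Fin n) × EuclideanSpace ℝ (Fin n)) : ℝ :=
  φ p * (1 - ‖p.2‖ ^ 2) ^ ((1 - (k : ℝ)) / 2)

section Aux

variable {n : ℕ}
local notation "E" => EuclideanSpace ℝ (Fin n)

/-- Derivative of `φ·(1−‖w‖²)^c` inside the unit ball, applied to a vector. -/
lemma fderiv_Hc_apply (c : ℝ) (φ : E × E → ℝ) (hφ : ContDiff ℝ (⊤ : ℕ∞) φ)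
    (p : E × E) (hp : ‖p.2‖ < 1) (v : E × E) :
    fderiv ℝ (fun q : E × E => φ q * (1 - ‖q.2‖ ^ 2) ^ c) p v
      = fderiv ℝ φ p v * (1 - ‖p.2‖ ^ 2) ^ c
        + φ p * (c * (1 - ‖p.2‖ ^ 2) ^ (c - 1) * (-2 * (inner ℝ p.2 v.2 : ℝ))) := by
  have hr : (0:ℝ) < 1 - ‖p.2‖ ^ 2 := by nlinarith [norm_nonneg p.2]
  have h0 : HasFDerivAt (fun q : E × E => ‖q.2‖ ^ 2)
      (2 • (innerSL ℝ p.2).comp (ContinuousLinearMap.snd ℝ E E)) p :=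
    (hasFDerivAt_snd).norm_sq
  have h1 := ((hasFDerivAt_const (1:ℝ) p).sub h0).rpow_const (p := c) (Or.inl hr.ne')
  have h2 := ((hφ.differentiable (by simp) p).hasFDerivAt.mul h1).fderiv
  erw [h2]
  simp [ContinuousLinearMap.smul_apply, ContinuousLinearMap.comp_apply, innerSL_apply_apply]
  ring

/-- The derivative of a fiberwise homogeneous function transforms accordingly. -/
lemma fderiv_hom (φ : E × E → ℝ) (hφ : ContDiff ℝ (⊤ : ℕ∞) φ) (k : ℕ)
    (hhom : ∀ (z w : E) (t : ℝ), φ (z, t • w) = t ^ k * φ (z, w))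
    (z w : E) (t : ℝ) (v : E × E) :
    fderiv ℝ φ (z, t • w) (v.1, t • v.2) = t ^ k * fderiv ℝ φ (z, w) v := by
  set L : (E × E) →L[ℝ] (E × E) :=
    (ContinuousLinearMap.id ℝ E).prodMap (t • ContinuousLinearMap.id ℝ E) with hL
  have hLapp : ∀ q : E × E, L q = (q.1, t • q.2) := fun q => rfl
  have hd := hφ.differentiable (by simp)
  have h1 : HasFDerivAt (fun q : E × E => φ (q.1, t • q.2))
      ((fderiv ℝ φ (z, t • w)).comp L) (z, w) := by
    have := ((hd (z, t • w)).hasFDerivAt).comp (z, w) L.hasFDerivAt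
    exact this
  have h2 : HasFDerivAt (fun q : E × E => t ^ k * φ q)
      (t ^ k • fderiv ℝ φ (z, w)) (z, w) :=
    ((hd (z, w)).hasFDerivAt).const_mul (t ^ k)
  have h3 : (fun q : E × E => φ (q.1, t • q.2)) = fun q : E × E => t ^ k * φ q :=
    funext fun q => hhom q.1 q.2 t
  rw [h3] at h1
  have := h1.unique h2
  have happ := congrArg (fun (L' : (E × E) →L[ℝ] ℝ) => L' v) this
  simpa [hLapp] using happ

end Aux

/-- the Poisson bracket of `H_{k,φ}` and `H_{m,ψ}`, where `φ, ψ` are fiberwise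
homogeneous polynomials in `w` of degrees `k` and `m` with coefficients smooth in `z`, is of
the form `H_{k+m−1,α} + H_{k+m+1,β}` with `α, β` fiberwise homogeneous of degrees `k+m−1`
and `k+m+1` (the degree `k+m−1` summand being absent when `k+m=0`). -/
theorem poisson_bracket_Hk_Hm (n k m : ℕ)
    (φ ψ : EuclideanSpace ℝ (Fin n) × EuclideanSpace ℝ (Fin n) → ℝ)
    (hφ : ContDiff ℝ (⊤ : ℕ∞) φ) (hψ : ContDiff ℝ (⊤ : ℕ∞) ψ)
    (hφhom : ∀ (z w : EuclideanSpace ℝ (Fin n)) (t : ℝ), φ (z, t • w) = t ^ k * φ (z, w))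
    (hψhom : ∀ (z w : EuclideanSpace ℝ (Fin n)) (t : ℝ), ψ (z, t • w) = t ^ m * ψ (z, w)) :
    ∃ α β : EuclideanSpace ℝ (Fin n) × EuclideanSpace ℝ (Fin n) → ℝ,
      ContDiff ℝ (⊤ : ℕ∞) α ∧ ContDiff ℝ (⊤ : ℕ∞) β ∧
      (∀ (z w : EuclideanSpace ℝ (Fin n)) (t : ℝ), t ≠ 0 →
        α (z, t • w) = t ^ ((k : ℤ) + (m : ℤ) - 1) * α (z, w)) ∧
      (∀ (z w : EuclideanSpace ℝ (Fin n)) (t : ℝ),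
        β (z, t • w) = t ^ (k + m + 1) * β (z, w)) ∧
      ∀ p : EuclideanSpace ℝ (Fin n) × EuclideanSpace ℝ (Fin n), ‖p.2‖ < 1 →
        pbn (Hk (k : ℤ) φ) (Hk (m : ℤ) ψ) p
          = Hk ((k : ℤ) + (m : ℤ) - 1) α p + Hk ((k : ℤ) + (m : ℤ) + 1) β p := by
  have hDφ : ∀ v : EuclideanSpace ℝ (Fin n) × EuclideanSpace ℝ (Fin n), ContDiff ℝ (⊤ : ℕ∞) (fun p : EuclideanSpace ℝ (Fin n) × EuclideanSpace ℝ (Fin n) => fderiv ℝ φ p v) :=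
    fun v => (ContinuousLinearMap.apply ℝ ℝ v).contDiff.comp (hφ.fderiv_right (by simp))
  have hDψ : ∀ v : EuclideanSpace ℝ (Fin n) × EuclideanSpace ℝ (Fin n), ContDiff ℝ (⊤ : ℕ∞) (fun p : EuclideanSpace ℝ (Fin n) × EuclideanSpace ℝ (Fin n) => fderiv ℝ ψ p v) :=
    fun v => (ContinuousLinearMap.apply ℝ ℝ v).contDiff.comp (hψ.fderiv_right (by simp))
  have hproj : ∀ j : Fin n, ContDiff ℝ (⊤ : ℕ∞) (fun p : EuclideanSpace ℝ (Fin n) × EuclideanSpace ℝ (Fin n) => p.2 j) := fun j =>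
    ((EuclideanSpace.proj j).comp (ContinuousLinearMap.snd ℝ (EuclideanSpace ℝ (Fin n)) (EuclideanSpace ℝ (Fin n)))).contDiff
  refine ⟨pbn φ ψ,
    fun p => ∑ j : Fin n, p.2 j *
      (((k:ℝ) - 1) * φ p * fderiv ℝ ψ p (EuclideanSpace.single j 1, 0)
        - ((m:ℝ) - 1) * ψ p * fderiv ℝ φ p (EuclideanSpace.single j 1, 0)),
    ?_, ?_, ?_, ?_, ?_⟩
  · rw [show pbn φ ψ = fun p : EuclideanSpace ℝ (Fin n) × EuclideanSpace ℝ (Fin n) => ∑ j : Fin n,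
        (fderiv ℝ φ p (0, EuclideanSpace.single j 1) * fderiv ℝ ψ p (EuclideanSpace.single j 1, 0)
          - fderiv ℝ φ p (EuclideanSpace.single j 1, 0) * fderiv ℝ ψ p (0, EuclideanSpace.single j 1))
      from rfl]
    exact ContDiff.sum fun j _ => ((hDφ _).mul (hDψ _)).sub ((hDφ _).mul (hDψ _))
  · exact ContDiff.sum fun j _ => (hproj j).mul
      (((contDiff_const.mul hφ).mul (hDψ _)).sub ((contDiff_const.mul hψ).mul (hDφ _)))
  · -- homogeneity of α = pbn φ ψ, degree k + m - 1
    intro z w t ht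
    simp only [pbn]
    have hexp : t ^ ((k : ℤ) + (m : ℤ) - 1) = t ^ (k + m) / t := by
      rw [zpow_sub₀ ht, zpow_one, ← zpow_natCast t (k + m)]
      push_cast
      ring_nf
    rw [hexp, Finset.mul_sum]
    refine Finset.sum_congr rfl fun j _ => ?_
    have hzφ : fderiv ℝ φ (z, t • w) (EuclideanSpace.single j 1, 0)
        = t ^ k * fderiv ℝ φ (z, w) (EuclideanSpace.single j 1, 0) := by
      simpa [smul_zero] using fderiv_hom φ hφ k hφhom z w t (EuclideanSpace.single j 1, 0)
    have hzψ : fderiv ℝ ψ (z, t • w) (EuclideanSpace.single j 1, 0)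
        = t ^ m * fderiv ℝ ψ (z, w) (EuclideanSpace.single j 1, 0) := by
      simpa [smul_zero] using fderiv_hom ψ hψ m hψhom z w t (EuclideanSpace.single j 1, 0)
    have hwφ : t * fderiv ℝ φ (z, t • w) (0, EuclideanSpace.single j 1)
        = t ^ k * fderiv ℝ φ (z, w) (0, EuclideanSpace.single j 1) := by
      have h := fderiv_hom φ hφ k hφhom z w t (0, EuclideanSpace.single j 1)
      have h2 : ((0 : EuclideanSpace ℝ (Fin n)), t • EuclideanSpace.single j (1:ℝ))
          = t • ((0 : EuclideanSpace ℝ (Fin n)), EuclideanSpace.single j (1:ℝ)) := by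
        simp [Prod.smul_mk]
      rw [h2, (fderiv ℝ φ (z, t • w)).map_smul] at h
      simpa [smul_eq_mul] using h
    have hwψ : t * fderiv ℝ ψ (z, t • w) (0, EuclideanSpace.single j 1)
        = t ^ m * fderiv ℝ ψ (z, w) (0, EuclideanSpace.single j 1) := by
      have h := fderiv_hom ψ hψ m hψhom z w t (0, EuclideanSpace.single j 1)
      have h2 : ((0 : EuclideanSpace ℝ (Fin n)), t • EuclideanSpace.single j (1:ℝ))
          = t • ((0 : EuclideanSpace ℝ (Fin n)), EuclideanSpace.single j (1:ℝ)) := by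
        simp [Prod.smul_mk]
      rw [h2, (fderiv ℝ ψ (z, t • w)).map_smul] at h
      simpa [smul_eq_mul] using h
    have e1 : fderiv ℝ φ (z, t • w) (0, EuclideanSpace.single j 1)
        = t ^ k * fderiv ℝ φ (z, w) (0, EuclideanSpace.single j 1) / t :=
      eq_div_of_mul_eq ht (by
        linarith [hwφ, mul_comm t (fderiv ℝ φ (z, t • w) (0, EuclideanSpace.single j 1))])
    have e2 : fderiv ℝ ψ (z, t • w) (0, EuclideanSpace.single j 1)
        = t ^ m * fderiv ℝ ψ (z, w) (0, EuclideanSpace.single j 1) / t :=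
      eq_div_of_mul_eq ht (by
        linarith [hwψ, mul_comm t (fderiv ℝ ψ (z, t • w) (0, EuclideanSpace.single j 1))])
    rw [e1, e2, hzφ, hzψ]
    field_simp
    ring
  · -- homogeneity of β, degree k + m + 1
    intro z w t
    rw [Finset.mul_sum]
    refine Finset.sum_congr rfl fun j _ => ?_
    have hzφ : fderiv ℝ φ (z, t • w) (EuclideanSpace.single j 1, 0)
        = t ^ k * fderiv ℝ φ (z, w) (EuclideanSpace.single j 1, 0) := by
      simpa [smul_zero] using fderiv_hom φ hφ k hφhom z w t (EuclideanSpace.single j 1, 0)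
    have hzψ : fderiv ℝ ψ (z, t • w) (EuclideanSpace.single j 1, 0)
        = t ^ m * fderiv ℝ ψ (z, w) (EuclideanSpace.single j 1, 0) := by
      simpa [smul_zero] using fderiv_hom ψ hψ m hψhom z w t (EuclideanSpace.single j 1, 0)
    have hs : ((z, t • w).2 : EuclideanSpace ℝ (Fin n)) j = t * (z, w).2 j := rfl
    rw [hs, hzφ, hzψ, hφhom, hψhom]
    ring
  · -- the main identity on the unit ball
    intro p hp
    have hr : (0:ℝ) < 1 - ‖p.2‖ ^ 2 := by nlinarith [norm_nonneg p.2]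
    have Fφ : ∀ v : EuclideanSpace ℝ (Fin n) × EuclideanSpace ℝ (Fin n), fderiv ℝ (Hk (k:ℤ) φ) p v
        = fderiv ℝ φ p v * (1 - ‖p.2‖ ^ 2) ^ ((1 - ((k:ℤ):ℝ)) / 2)
          + φ p * (((1 - ((k:ℤ):ℝ)) / 2) * (1 - ‖p.2‖ ^ 2) ^ ((1 - ((k:ℤ):ℝ)) / 2 - 1)
              * (-2 * (inner ℝ p.2 v.2 : ℝ))) := fun v => fderiv_Hc_apply _ φ hφ p hp v
    have Fψ : ∀ v : EuclideanSpace ℝ (Fin n) × EuclideanSpace ℝ (Fin n), fderiv ℝ (Hk (m:ℤ) ψ) p v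
        = fderiv ℝ ψ p v * (1 - ‖p.2‖ ^ 2) ^ ((1 - ((m:ℤ):ℝ)) / 2)
          + ψ p * (((1 - ((m:ℤ):ℝ)) / 2) * (1 - ‖p.2‖ ^ 2) ^ ((1 - ((m:ℤ):ℝ)) / 2 - 1)
              * (-2 * (inner ℝ p.2 v.2 : ℝ))) := fun v => fderiv_Hc_apply _ ψ hψ p hp v
    simp only [pbn, Hk, Fφ, Fψ, EuclideanSpace.inner_single_right, conj_trivial, one_mul,
      inner_zero_right, mul_zero, add_zero, neg_zero, zero_mul]
    push_cast
    rw [Finset.sum_mul, Finset.sum_mul, ← Finset.sum_add_distrib]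
    refine Finset.sum_congr rfl fun j _ => ?_
    have h1 : (1 - ‖p.2‖ ^ 2) ^ ((1 - (k:ℝ)) / 2 - 1)
        = (1 - ‖p.2‖ ^ 2) ^ ((1 - (k:ℝ)) / 2) / (1 - ‖p.2‖ ^ 2) := by
      rw [Real.rpow_sub hr, Real.rpow_one]
    have h2 : (1 - ‖p.2‖ ^ 2) ^ ((1 - (m:ℝ)) / 2 - 1)
        = (1 - ‖p.2‖ ^ 2) ^ ((1 - (m:ℝ)) / 2) / (1 - ‖p.2‖ ^ 2) := by
      rw [Real.rpow_sub hr, Real.rpow_one]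
    have h3 : (1 - ‖p.2‖ ^ 2) ^ ((1 - ((k:ℝ) + (m:ℝ) - 1)) / 2)
        = (1 - ‖p.2‖ ^ 2) ^ ((1 - (k:ℝ)) / 2) * (1 - ‖p.2‖ ^ 2) ^ ((1 - (m:ℝ)) / 2) := by
      rw [← Real.rpow_add hr]; ring_nf
    have h4 : (1 - ‖p.2‖ ^ 2) ^ ((1 - ((k:ℝ) + (m:ℝ) + 1)) / 2)
        = (1 - ‖p.2‖ ^ 2) ^ ((1 - (k:ℝ)) / 2) * (1 - ‖p.2‖ ^ 2) ^ ((1 - (m:ℝ)) / 2)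
          / (1 - ‖p.2‖ ^ 2) := by
      rw [show (1 - ((k:ℝ) + (m:ℝ) + 1)) / 2 = (1 - (k:ℝ)) / 2 + (1 - (m:ℝ)) / 2 - 1 from by ring,
        Real.rpow_sub hr, Real.rpow_add hr, Real.rpow_one]
    rw [h1, h2, h3, h4]
    field_simp
    ring
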